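/- arXiv:2210.15325 — 5 statements merged into one kernel-verified Lean document; each statement's English description precedes it below -/
import Mathlib

section
/- For the complete bipartite graph K_{n,n} with n ≥ 2, gpack(K_{n,n}) = ⌊2n/3⌋. -/
open SimpleGraph

/-- A geodesic (shortest path) in `G`: a path whose length equals the distance
between its endpoints. -/
def IsGeodesic {V : Type*} (G : SimpleGraph V) {u v : V} (p : G.Walk u v) : Prop :=
  p.IsPath ∧ p.length = G.dist u v

/-- A maximal geodesic: a geodesic that is not contained as a subpath of any longer
geodesic, equivalently it cannot be extended at either end to a longer geodesic. -/
def IsMaxGeodesic {V : Type*} (G : SimpleGraph V) {u v : V} (p : G.Walk u v) : Prop :=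
  IsGeodesic G p ∧
  (∀ w (h : G.Adj w u), ¬ IsGeodesic G (SimpleGraph.Walk.cons h p)) ∧
  (∀ w (h : G.Adj v w), ¬ IsGeodesic G (p.concat h))

/-- A set of vertices that is the vertex set of some maximal geodesic of `G`. -/
def IsMaxGeodesicSet {V : Type*} (G : SimpleGraph V) (s : Set V) : Prop :=
  ∃ (u v : V) (p : G.Walk u v), IsMaxGeodesic G p ∧ s = {x | x ∈ p.support}

/-- A geodesic packing: a family of pairwise vertex-disjoint maximal geodesics. -/
def IsGeodesicPacking {V : Type*} (G : SimpleGraph V) (P : Set (Set V)) : Prop :=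
  (∀ s ∈ P, IsMaxGeodesicSet G s) ∧ P.Pairwise Disjoint

/-- The geodesic packing number `gpack(G)`. -/
noncomputable def gpackNum {V : Type*} (G : SimpleGraph V) : ℕ :=
  sSup {k | ∃ P : Finset (Set V), IsGeodesicPacking G ↑P ∧ P.card = k}

/-- A geodesic transversal: a vertex set hitting every maximal geodesic. -/
def IsGeodesicTransversal {V : Type*} (G : SimpleGraph V) (S : Set V) : Prop :=
  ∀ s, IsMaxGeodesicSet G s → (S ∩ s).Nonempty

/-- The geodesic transversal number `gt(G)`. -/
noncomputable def gtransNum {V : Type*} (G : SimpleGraph V) : ℕ :=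
  sInf {k | ∃ S : Finset V, IsGeodesicTransversal G ↑S ∧ S.card = k}

/-! A single vertex or a single edge of `K_{V,W}` with both sides of size at least two always
extends to a longer geodesic, so every maximal geodesic has at least three vertices and a packing
of `K_{n,n}` has at most `2n/3` members. Conversely, two vertices on the same side are
non-adjacent twins, so every path through them of length two is a maximal geodesic; each block of
three consecutive indices on both sides carries two disjoint such paths, and a leftover block of
two indices carries one more. -/

variable {V : Type*} {G : SimpleGraph V}

theorem Set.mul_card_le_natCard_of_pairwise_disjoint {α : Type*} [Finite α]
    {P : Finset (Set α)} (hP : (P : Set (Set α)).Pairwise Disjoint) {k : ℕ}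
    (hk : ∀ s ∈ P, k ≤ s.ncard) : k * P.card ≤ Nat.card α := by
  calc k * P.card ≤ ∑ s ∈ P, s.ncard := by
        rw [mul_comm]; simpa using Finset.card_nsmul_le_sum P Set.ncard k hk
    _ = (⋃ s ∈ (P : Set (Set α)), s).ncard := by
        rw [P.finite_toSet.ncard_biUnion (fun s _ => s.toFinite) hP, finsum_mem_coe_finset]
    _ ≤ Nat.card α := Set.ncard_le_card _

theorem SimpleGraph.dist_eq_two_of_adj_of_adj {x y z : V} (hxy : G.Adj x y) (hyz : G.Adj y z)
    (hxz : x ≠ z) (hnxz : ¬G.Adj x z) : G.dist x z = 2 := by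
  have : G.edist x z = 2 := G.edist_eq_two_iff.2 ⟨hxz, hnxz, y, hxy, hyz.symm⟩
  simp [SimpleGraph.dist, this]

theorem SimpleGraph.Walk.IsPath.ncard_support {u v : V} {p : G.Walk u v} (hp : p.IsPath) :
    {x | x ∈ p.support}.ncard = p.length + 1 := by
  classical
  rw [← p.length_support, ← List.toFinset_card_of_nodup hp.support_nodup, ← Set.ncard_coe_finset]
  simp

theorem isGeodesic_cons_nil {u v : V} (h : G.Adj u v) : IsGeodesic G (.cons h .nil) :=
  ⟨by simpa using h.ne, by simp [SimpleGraph.dist_eq_one_iff_adj.2 h]⟩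

theorem isGeodesic_cons_cons_nil {x y z : V} (hxy : G.Adj x y) (hyz : G.Adj y z) (hxz : x ≠ z)
    (hnxz : ¬G.Adj x z) : IsGeodesic G (.cons hxy (.cons hyz .nil)) :=
  ⟨by simp [hxy.ne, hyz.ne, hxz], by simp [G.dist_eq_two_of_adj_of_adj hxy hyz hxz hnxz]⟩

theorem IsMaxGeodesic.two_le_length {u v : V} {p : G.Walk u v} (hp : IsMaxGeodesic G p)
    (hnbr : ∀ x, ∃ y, G.Adj y x)
    (hext : ∀ x y, G.Adj x y → ∃ z, G.Adj y z ∧ x ≠ z ∧ ¬G.Adj x z) : 2 ≤ p.length := by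
  obtain ⟨-, hcons, hconcat⟩ := hp
  match p with
  | .nil =>
    obtain ⟨y, hy⟩ := hnbr u
    exact absurd (isGeodesic_cons_nil hy) (hcons y hy)
  | .cons h .nil =>
    obtain ⟨z, hz, hne, hnadj⟩ := hext _ _ h
    exact absurd (isGeodesic_cons_cons_nil h hz hne hnadj) (hconcat z hz)
  | .cons _ (.cons _ _) => simp

/-- A path `x - y - z` whose ends are non-adjacent twins cannot be prolonged to a geodesic:
a new end vertex would be adjacent to both `x` and `z`. -/
theorem isMaxGeodesicSet_of_twins {x y z : V} (hxy : G.Adj x y) (hyz : G.Adj y z) (hxz : x ≠ z)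
    (htwin : ∀ w, G.Adj w x ↔ G.Adj w z) : IsMaxGeodesicSet G {x, y, z} := by
  have hnxz : ¬G.Adj x z := fun h => G.irrefl ((htwin z).1 h.symm)
  refine ⟨x, z, .cons hxy (.cons hyz .nil),
    ⟨isGeodesic_cons_cons_nil hxy hyz hxz hnxz, ?_, ?_⟩, by ext; simp⟩
  · rintro w hw ⟨-, hlen⟩
    simp [SimpleGraph.dist_eq_one_iff_adj.2 ((htwin w).1 hw)] at hlen
  · rintro w hw ⟨-, hlen⟩
    simp [SimpleGraph.dist_eq_one_iff_adj.2 ((htwin w).2 hw.symm).symm] at hlen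

theorem IsMaxGeodesicSet.nonempty {s : Set V} (hs : IsMaxGeodesicSet G s) : s.Nonempty := by
  obtain ⟨u, -, p, -, rfl⟩ := hs
  exact ⟨u, p.start_mem_support⟩

theorem exists_isGeodesicPacking_of_fibers {ι : Type*} (f : V → ι) (S : Finset ι)
    (hS : ∀ i ∈ S, IsMaxGeodesicSet G (f ⁻¹' {i})) :
    ∃ P : Finset (Set V), IsGeodesicPacking G ↑P ∧ P.card = S.card := by
  classical
  have hinj : Set.InjOn (fun i => f ⁻¹' {i}) S := by
    intro i hi j _ hij
    obtain ⟨x, hx⟩ := (hS i hi).nonempty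
    have hx' : x ∈ f ⁻¹' {j} := (show f ⁻¹' {i} = f ⁻¹' {j} from hij) ▸ hx
    exact hx.symm.trans hx'
  refine ⟨S.image fun i => f ⁻¹' {i}, ⟨?_, ?_⟩, Finset.card_image_of_injOn hinj⟩
  · simp only [Finset.coe_image, Set.forall_mem_image]
    exact hS
  · simp only [Finset.coe_image]
    rintro _ ⟨i, -, rfl⟩ _ ⟨j, -, rfl⟩ hij
    exact Disjoint.preimage f (Set.disjoint_singleton.2 fun h => hij (h ▸ rfl))

theorem gpackNum_eq {P : Finset (Set V)} (hP : IsGeodesicPacking G ↑P)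
    (hmax : ∀ Q : Finset (Set V), IsGeodesicPacking G ↑Q → Q.card ≤ P.card) :
    gpackNum G = P.card :=
  IsGreatest.csSup_eq ⟨⟨P, hP, rfl⟩, by rintro _ ⟨Q, hQ, rfl⟩; exact hmax Q hQ⟩

section completeBipartite

variable {W : Type*}

theorem isMaxGeodesicSet_completeBipartiteGraph_inl {a a' : V} (b : W) (h : a ≠ a') :
    IsMaxGeodesicSet (completeBipartiteGraph V W) {.inl a, .inr b, .inl a'} :=
  isMaxGeodesicSet_of_twins (by simp) (by simp) (by simpa using h) (by simp)

theorem isMaxGeodesicSet_completeBipartiteGraph_inr {b b' : W} (a : V) (h : b ≠ b') :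
    IsMaxGeodesicSet (completeBipartiteGraph V W) {.inr b, .inl a, .inr b'} :=
  isMaxGeodesicSet_of_twins (by simp) (by simp) (by simpa using h) (by simp)

theorem three_le_ncard_of_isMaxGeodesicSet_completeBipartiteGraph [Nontrivial V] [Nontrivial W]
    {s : Set (V ⊕ W)} (hs : IsMaxGeodesicSet (completeBipartiteGraph V W) s) : 3 ≤ s.ncard := by
  obtain ⟨u, v, p, hp, rfl⟩ := hs
  have hnbr : ∀ x : V ⊕ W, ∃ y, (completeBipartiteGraph V W).Adj y x := by
    rintro (a | b)
    · exact ⟨.inr (Classical.arbitrary W), by simp⟩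
    · exact ⟨.inl (Classical.arbitrary V), by simp⟩
  have hext : ∀ x y : V ⊕ W, (completeBipartiteGraph V W).Adj x y →
      ∃ z, (completeBipartiteGraph V W).Adj y z ∧ x ≠ z ∧ ¬(completeBipartiteGraph V W).Adj x z := by
    rintro (a | b) (a' | b') h <;> simp at h
    · obtain ⟨a'', ha⟩ := exists_ne a
      exact ⟨.inl a'', by simp [ha.symm]⟩
    · obtain ⟨b'', hb⟩ := exists_ne b
      exact ⟨.inr b'', by simp [hb.symm]⟩
  have := hp.two_le_length hnbr hext
  rw [hp.1.1.ncard_support]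
  omega

end completeBipartite

/-- The triples `{inl (3t), inr (3t), inl (3t+1)}` and `{inr (3t+1), inl (3t+2), inr (3t+2)}`
are the fibres of this map over `2t` and `2t+1`. -/
def tripleIndex {n : ℕ} : Fin n ⊕ Fin n → ℕ :=
  Sum.elim (fun i => 2 * i / 3) (fun j => (2 * j + 1) / 3)

theorem isMaxGeodesicSet_tripleIndex_preimage {n m : ℕ} (hm : m < 2 * n / 3) :
    IsMaxGeodesicSet (completeBipartiteGraph (Fin n) (Fin n)) (tripleIndex ⁻¹' {m}) := by
  obtain ⟨t, rfl | rfl⟩ := Nat.even_or_odd' m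
  · convert isMaxGeodesicSet_completeBipartiteGraph_inl (a := (⟨3 * t, by omega⟩ : Fin n))
      (a' := ⟨3 * t + 1, by omega⟩) (⟨3 * t, by omega⟩ : Fin n) (by simp) using 1
    ext (i | j) <;> simp [tripleIndex, Fin.ext_iff] <;> omega
  · convert isMaxGeodesicSet_completeBipartiteGraph_inr (b := (⟨3 * t + 1, by omega⟩ : Fin n))
      (b' := ⟨3 * t + 2, by omega⟩) (⟨3 * t + 2, by omega⟩ : Fin n) (by simp) using 1
    ext (i | j) <;> simp [tripleIndex, Fin.ext_iff] <;> omega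

theorem gpack_completeBipartite (n : ℕ) (hn : 2 ≤ n) :
    gpackNum (completeBipartiteGraph (Fin n) (Fin n)) = 2 * n / 3 := by
  have : Nontrivial (Fin n) := Fin.nontrivial_iff_two_le.2 hn
  obtain ⟨P, hP, hcard⟩ := exists_isGeodesicPacking_of_fibers tripleIndex (Finset.range (2 * n / 3))
    fun m hm => isMaxGeodesicSet_tripleIndex_preimage (Finset.mem_range.1 hm)
  rw [Finset.card_range] at hcard
  rw [gpackNum_eq hP, hcard]
  intro Q hQ
  have := Set.mul_card_le_natCard_of_pairwise_disjoint hQ.2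
    fun s hs => three_le_ncard_of_isMaxGeodesicSet_completeBipartiteGraph (hQ.1 s hs)
  simp only [Nat.card_eq_fintype_card, Fintype.card_sum, Fintype.card_fin] at this
  omega
end

section
/- For the complete bipartite graph K_{n,n} with n ≥ 2, the geodesic transversal number satisfies gt(K_{n,n}) = n. -/
open SimpleGraph

/-! In a graph of diameter at most `2` the maximal geodesics include every induced path on three
vertices, so a transversal of `K_{n,n}` missing two vertices of one side must contain the whole
other side. A transversal thus contains a full side or all but one vertex of each side, hence at
least `min (n, 2n - 2) = n` vertices; conversely one side meets every edge, and every maximal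
geodesic has an edge. -/

open Sum Finset

section Geodesic

variable {V : Type*} {G : SimpleGraph V} {u v w x : V}

lemma isGeodesic_iff {p : G.Walk u v} : IsGeodesic G p ↔ p.length = G.dist u v :=
  ⟨And.right, fun h => ⟨p.isPath_of_length_eq_dist h, h⟩⟩

lemma IsGeodesic.length_le {d : ℕ} (hG : ∀ u v, G.dist u v ≤ d) {p : G.Walk u v}
    (hp : IsGeodesic G p) : p.length ≤ d :=
  hp.2 ▸ hG u v

lemma IsGeodesic.isMaxGeodesic_of_length_eq {d : ℕ} (hG : ∀ u v, G.dist u v ≤ d)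
    {p : G.Walk u v} (hp : IsGeodesic G p) (hlen : p.length = d) : IsMaxGeodesic G p :=
  ⟨hp, fun _ _ h => by simpa [hlen] using h.length_le hG,
    fun _ _ h => by simpa [hlen] using h.length_le hG⟩

lemma isGeodesic_cons_cons (huw : u ≠ w) (hnadj : ¬G.Adj u w) (hux : G.Adj u x)
    (hxw : G.Adj x w) : IsGeodesic G (.cons hux (.cons hxw .nil)) := by
  have hdist : 1 < G.dist u w :=
    Reachable.one_lt_dist_of_ne_of_not_adj ⟨.cons hux (.cons hxw .nil)⟩ huw hnadj
  exact isGeodesic_iff.2 (le_antisymm hdist (dist_le _))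

lemma dist_le_two_of_adj_of_adj (hux : G.Adj u x) (hxw : G.Adj x w) : G.dist u w ≤ 2 :=
  dist_le (.cons hux (.cons hxw .nil))

lemma not_isMaxGeodesic_nil (h : G.Adj w u) : ¬IsMaxGeodesic G (Walk.nil : G.Walk u u) :=
  fun hp => hp.2.1 w h (isGeodesic_iff.2 (by simp [dist_eq_one_iff_adj.2 h]))

lemma IsGeodesicTransversal.mem_of_adj_of_adj (hG : ∀ u v, G.dist u v ≤ 2) {S : Set V}
    (hS : IsGeodesicTransversal G S) (huw : u ≠ w) (hnadj : ¬G.Adj u w) (hux : G.Adj u x)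
    (hxw : G.Adj x w) : u ∈ S ∨ x ∈ S ∨ w ∈ S := by
  have hmax := (isGeodesic_cons_cons huw hnadj hux hxw).isMaxGeodesic_of_length_eq hG rfl
  obtain ⟨y, hyS, hy⟩ := hS _ ⟨_, _, _, hmax, rfl⟩
  simp only [Walk.support_cons, Walk.support_nil, Set.mem_ofPred_eq, List.mem_cons,
    List.not_mem_nil, or_false] at hy
  rcases hy with rfl | rfl | rfl <;> simp [hyS]

end Geodesic

section CompleteBipartite

variable {α β : Type*}

lemma completeBipartiteGraph_dist_le_two [Nonempty α] [Nonempty β] (u v : α ⊕ β) :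
    (completeBipartiteGraph α β).dist u v ≤ 2 := by
  obtain ⟨a⟩ := ‹Nonempty α›
  obtain ⟨b⟩ := ‹Nonempty β›
  rcases u with a₁ | b₁ <;> rcases v with a₂ | b₂
  · exact dist_le_two_of_adj_of_adj (x := inr b) (by simp) (by simp)
  · exact (dist_eq_one_iff_adj.2 (by simp)).trans_le one_le_two
  · exact (dist_eq_one_iff_adj.2 (by simp)).trans_le one_le_two
  · exact dist_le_two_of_adj_of_adj (x := inl a) (by simp) (by simp)

lemma IsGeodesicTransversal.completeBipartiteGraph_inr_mem {S : Set (α ⊕ β)}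
    (hS : IsGeodesicTransversal (completeBipartiteGraph α β) S) {a c : α} (hac : a ≠ c)
    (ha : inl a ∉ S) (hc : inl c ∉ S) (b : β) : inr b ∈ S := by
  have : Nonempty α := ⟨a⟩
  have : Nonempty β := ⟨b⟩
  simpa [ha, hc] using hS.mem_of_adj_of_adj completeBipartiteGraph_dist_le_two
    (inl_injective.ne hac) (by simp) (x := inr b) (by simp) (by simp)

lemma IsGeodesicTransversal.completeBipartiteGraph_inl_mem {S : Set (α ⊕ β)}
    (hS : IsGeodesicTransversal (completeBipartiteGraph α β) S) {b d : β} (hbd : b ≠ d)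
    (hb : inr b ∉ S) (hd : inr d ∉ S) (a : α) : inl a ∈ S := by
  have : Nonempty α := ⟨a⟩
  have : Nonempty β := ⟨b⟩
  simpa [hb, hd] using hS.mem_of_adj_of_adj completeBipartiteGraph_dist_le_two
    (inr_injective.ne hbd) (by simp) (x := inl a) (by simp) (by simp)

lemma exists_ne_notMem_of_card_add_two_le [Fintype α] [DecidableEq α] {s : Finset α}
    (hs : #s + 2 ≤ Fintype.card α) : ∃ a c, a ≠ c ∧ a ∉ s ∧ c ∉ s := by
  obtain ⟨a, ha, c, hc, hac⟩ := one_lt_card.1 (show 1 < #sᶜ by rw [card_compl]; omega)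
  exact ⟨a, c, hac, mem_compl.1 ha, mem_compl.1 hc⟩

lemma IsGeodesicTransversal.completeBipartiteGraph_min_card_le [Fintype α] [Fintype β]
    [DecidableEq α] [DecidableEq β] (hα : 2 ≤ Fintype.card α) {S : Finset (α ⊕ β)}
    (hS : IsGeodesicTransversal (completeBipartiteGraph α β) ↑S) :
    min (Fintype.card α) (Fintype.card β) ≤ #S := by
  have hright : #S.toLeft + 2 ≤ Fintype.card α → #S.toRight = Fintype.card β := fun h => by
    obtain ⟨a, c, hac, ha, hc⟩ := exists_ne_notMem_of_card_add_two_le h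
    rw [card_eq_iff_eq_univ, eq_univ_iff_forall]
    simpa using hS.completeBipartiteGraph_inr_mem hac (by simpa using ha) (by simpa using hc)
  have hleft : #S.toRight + 2 ≤ Fintype.card β → #S.toLeft = Fintype.card α := fun h => by
    obtain ⟨b, d, hbd, hb, hd⟩ := exists_ne_notMem_of_card_add_two_le h
    rw [card_eq_iff_eq_univ, eq_univ_iff_forall]
    simpa using hS.completeBipartiteGraph_inl_mem hbd (by simpa using hb) (by simpa using hd)
  have := card_toLeft_add_card_toRight (u := S)
  have := card_le_univ S.toLeft
  have := card_le_univ S.toRight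
  omega

lemma completeBipartiteGraph_isGeodesicTransversal_range_inl [Nonempty α] :
    IsGeodesicTransversal (completeBipartiteGraph α β) (Set.range inl) := by
  rintro s ⟨u, v, p, hp, rfl⟩
  cases p with
  | nil =>
    cases u with
    | inl a => exact ⟨inl a, ⟨a, rfl⟩, by simp⟩
    | inr b =>
      exact (not_isMaxGeodesic_nil (w := inl (Classical.arbitrary α)) (by simp) hp).elim
  | @cons _ x _ h _ =>
    cases u with
    | inl a => exact ⟨inl a, ⟨a, rfl⟩, by simp⟩
    | inr b =>
      cases x with
      | inl a => exact ⟨inl a, ⟨a, rfl⟩, by simp⟩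
      | inr d => simp at h

end CompleteBipartite

theorem gt_completeBipartite (n : ℕ) (hn : 2 ≤ n) :
    gtransNum (completeBipartiteGraph (Fin n) (Fin n)) = n := by
  have : Nonempty (Fin n) := ⟨⟨0, by omega⟩⟩
  have hmem : n ∈ {k | ∃ S : Finset (Fin n ⊕ Fin n),
      IsGeodesicTransversal (completeBipartiteGraph (Fin n) (Fin n)) ↑S ∧ #S = k} :=
    ⟨univ.map .inl, by simpa using completeBipartiteGraph_isGeodesicTransversal_range_inl,
      by simp⟩
  refine le_antisymm (Nat.sInf_le hmem) (le_csInf ⟨n, hmem⟩ ?_)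
  rintro k ⟨S, hS, rfl⟩
  simpa using hS.completeBipartiteGraph_min_card_le (by simpa using hn)
end

section
/- Let S be a subset of vertices of the rook's graph K_n □ K_n (n ≥ 2) such that S contains no three vertices (g,h), (g',h), (g,h') with g ≠ g' and h ≠ h'. Then |S| ≤ 2n − 2. -/
open SimpleGraph

/-!
A forbidden configuration is a point with both a row-mate and a column-mate, so every point
of `S` is alone in its row or alone in its column. The points alone in their row have distinct
rows; the others are alone in their columns, which are therefore distinct and avoid every
column used by the first kind. Counting rows and columns gives `|S| ≤ |α| + |β|`. If the first
kind fills every row, it is all of `S`; otherwise a row is lost, and a column is lost as well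
unless the first kind is empty, in which case `|S| ≤ |β|`.
-/

namespace Finset

variable {α β : Type*} [DecidableEq α] [DecidableEq β]

def HasCorner (S : Finset (α × β)) : Prop :=
  ∃ g g' h h', g ≠ g' ∧ h ≠ h' ∧ (g, h) ∈ S ∧ (g', h) ∈ S ∧ (g, h') ∈ S

def rowSingletons (S : Finset (α × β)) : Finset (α × β) :=
  S.filter fun p => ∀ q ∈ S, q.1 = p.1 → q = p

variable {S : Finset (α × β)}

theorem rowSingletons_subset : S.rowSingletons ⊆ S := filter_subset _ _

theorem eq_of_mem_rowSingletons {p q : α × β} (hp : p ∈ S.rowSingletons) (hq : q ∈ S)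
    (h : q.1 = p.1) : q = p :=
  (mem_filter.mp hp).2 q hq h

theorem injOn_fst_rowSingletons : Set.InjOn Prod.fst (S.rowSingletons : Set (α × β)) :=
  fun _ hp _ hq h => eq_of_mem_rowSingletons hq (rowSingletons_subset hp) h

theorem eq_of_mem_sdiff_rowSingletons (hS : ¬ S.HasCorner) {p q : α × β}
    (hp : p ∈ S \ S.rowSingletons) (hq : q ∈ S) (h : q.2 = p.2) : q = p := by
  obtain ⟨hpS, hpA⟩ := mem_sdiff.mp hp
  obtain ⟨r, hrS, hr, hrp⟩ : ∃ r ∈ S, r.1 = p.1 ∧ r ≠ p := by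
    simpa [rowSingletons, hpS] using hpA
  by_contra hqp
  exact hS ⟨p.1, q.1, p.2, r.2, fun h1 => hqp (Prod.ext h1.symm h),
    fun h2 => hrp (Prod.ext hr h2.symm), hpS, h ▸ hq, hr ▸ hrS⟩

theorem injOn_snd_sdiff_rowSingletons (hS : ¬ S.HasCorner) :
    Set.InjOn Prod.snd (↑(S \ S.rowSingletons) : Set (α × β)) :=
  fun _ hp _ hq h => eq_of_mem_sdiff_rowSingletons hS hq (mem_sdiff.mp hp).1 h

theorem card_image_snd_rowSingletons_add_card_sdiff_le [Fintype β] (hS : ¬ S.HasCorner) :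
    #(S.rowSingletons.image Prod.snd) + #(S \ S.rowSingletons) ≤ Fintype.card β := by
  have hdisj :
      Disjoint (S.rowSingletons.image Prod.snd) ((S \ S.rowSingletons).image Prod.snd) := by
    refine disjoint_left.mpr fun h ha hb => ?_
    obtain ⟨a, haA, rfl⟩ := mem_image.mp ha
    obtain ⟨b, hbB, hba⟩ := mem_image.mp hb
    have hab : a = b := eq_of_mem_sdiff_rowSingletons hS hbB (rowSingletons_subset haA) hba.symm
    exact (mem_sdiff.mp hbB).2 (hab ▸ haA)
  calc #(S.rowSingletons.image Prod.snd) + #(S \ S.rowSingletons)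
      = #(S.rowSingletons.image Prod.snd ∪ (S \ S.rowSingletons).image Prod.snd) := by
        rw [card_union_of_disjoint hdisj,
          card_image_of_injOn (s := S \ S.rowSingletons) (injOn_snd_sdiff_rowSingletons hS)]
    _ ≤ Fintype.card β := card_le_univ _

section

variable [Fintype α]

theorem card_rowSingletons_le : #S.rowSingletons ≤ Fintype.card α :=
  card_le_card_of_injOn Prod.fst (fun _ _ => mem_univ _) injOn_fst_rowSingletons

theorem sdiff_rowSingletons_eq_empty (h : #S.rowSingletons = Fintype.card α) :
    S \ S.rowSingletons = ∅ := by
  have hrows : S.rowSingletons.image Prod.fst = univ :=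
    eq_univ_of_card _ ((card_image_of_injOn injOn_fst_rowSingletons).trans h)
  refine sdiff_eq_empty_iff_subset.mpr fun p hp => ?_
  obtain ⟨a, ha, hap⟩ := mem_image.mp (hrows ▸ mem_univ p.1)
  exact eq_of_mem_rowSingletons ha hp hap.symm ▸ ha

end

theorem card_add_two_le_of_not_hasCorner [Fintype α] [Fintype β] (hα : 2 ≤ Fintype.card α)
    (hβ : 2 ≤ Fintype.card β) (hS : ¬ S.HasCorner) :
    #S + 2 ≤ Fintype.card α + Fintype.card β := by
  have hsplit := card_sdiff_add_card_eq_card (rowSingletons_subset (S := S))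
  have hA := card_rowSingletons_le (S := S)
  have hcols := card_image_snd_rowSingletons_add_card_sdiff_le hS
  by_cases hB : #(S \ S.rowSingletons) = 0
  · omega
  have hA_lt : #S.rowSingletons < Fintype.card α :=
    hA.lt_of_ne fun h => hB (card_eq_zero.mpr (sdiff_rowSingletons_eq_empty h))
  rcases (#S.rowSingletons).eq_zero_or_pos with hA0 | hA0
  · omega
  · have hcols_pos := ((card_pos.mp hA0).image Prod.snd).card_pos
    omega

end Finset

theorem rook_noGeodesic_card_le (n : ℕ) (hn : 2 ≤ n) (S : Finset (Fin n × Fin n))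
    (hS : ¬ ∃ g g' h h' : Fin n, g ≠ g' ∧ h ≠ h' ∧
      (g, h) ∈ S ∧ (g', h) ∈ S ∧ (g, h') ∈ S) :
    S.card ≤ 2 * n - 2 := by
  have := Finset.card_add_two_le_of_not_hasCorner (by simpa using hn) (by simpa using hn) hS
  simp only [Fintype.card_fin] at this
  omega
end

section
/- If G₁, …, G_r (r ≥ 1) are uniform geodesic graphs, then their Cartesian product G₁ □ ⋯ □ G_r is a uniform geodesic graph. -/
open SimpleGraph

/-- The Cartesian product of an indexed family of graphs. -/
def cartProdIndexed {I : Type*} {W : I → Type*} (G : (i : I) → SimpleGraph (W i)) :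
    SimpleGraph ((i : I) → W i) where
  Adj x y := ∃ i, (G i).Adj (x i) (y i) ∧ ∀ j, j ≠ i → x j = y j
  symm := by
    constructor
    rintro x y ⟨i, hadj, h⟩
    exact ⟨i, hadj.symm, fun j hj => (h j hj).symm⟩
  loopless := by
    constructor
    rintro x ⟨i, hadj, _⟩
    exact (G i).irrefl hadj

/-- A uniform geodesic graph: connected, and every maximal geodesic has length
equal to the diameter. -/
def UniformGeodesic {V : Type*} (G : SimpleGraph V) : Prop :=
  G.Connected ∧ ∀ (u v : V) (p : G.Walk u v), IsMaxGeodesic G p → p.length = G.diam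

/-!
Whether a geodesic is maximal depends only on its endpoints `u, v`: it is maximal iff `u` is
maximally distant from `v` and `v` from `u` (no neighbour of either endpoint is farther from the
other). Distances in a Cartesian product are sums of coordinate distances, so if `x, y` are
mutually maximally distant in the product, then so are `xᵢ, yᵢ` in every factor. In a uniform
geodesic factor such a pair is at distance `diam Gᵢ`, which is then finite; hence a maximal
geodesic of the product has length `∑ diam Gᵢ`, the diameter of the product.
-/

open Function Finset

section Geodesic

variable {V : Type*} {G : SimpleGraph V} {u v w : V}

lemma isGeodesic_iff_length_eq_dist (p : G.Walk u v) : IsGeodesic G p ↔ p.length = G.dist u v :=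
  ⟨And.right, fun h => ⟨p.isPath_of_length_eq_dist h, h⟩⟩

lemma IsGeodesic.reverse {p : G.Walk u v} (hp : IsGeodesic G p) : IsGeodesic G p.reverse := by
  rw [isGeodesic_iff_length_eq_dist, Walk.length_reverse, dist_comm]
  exact hp.2

lemma IsGeodesic.cons_iff {p : G.Walk u v} (hp : IsGeodesic G p) (h : G.Adj w u) :
    IsGeodesic G (Walk.cons h p) ↔ G.dist u v < G.dist w v := by
  have hle : G.dist w v ≤ p.length + 1 := dist_le (Walk.cons h p)
  have hlen : p.length = G.dist u v := hp.2
  rw [isGeodesic_iff_length_eq_dist, Walk.length_cons]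
  omega

lemma IsGeodesic.concat_iff {p : G.Walk u v} (hp : IsGeodesic G p) (h : G.Adj v w) :
    IsGeodesic G (p.concat h) ↔ G.dist v u < G.dist w u := by
  rw [← hp.reverse.cons_iff h.symm, ← Walk.reverse_concat]
  exact ⟨IsGeodesic.reverse, fun hq => by simpa using hq.reverse⟩

def IsMaxDistantFrom (G : SimpleGraph V) (u v : V) : Prop :=
  ∀ w, G.Adj u w → G.dist w v ≤ G.dist u v

lemma isMaxGeodesic_iff (p : G.Walk u v) :
    IsMaxGeodesic G p ↔ IsGeodesic G p ∧ IsMaxDistantFrom G u v ∧ IsMaxDistantFrom G v u := by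
  refine ⟨fun ⟨hp, hu, hv⟩ => ⟨hp, ?_, ?_⟩, fun ⟨hp, hu, hv⟩ => ⟨hp, ?_, ?_⟩⟩
  · exact fun w h => not_lt.mp fun hlt => hu w h.symm ((hp.cons_iff h.symm).mpr hlt)
  · exact fun w h => not_lt.mp fun hlt => hv w h ((hp.concat_iff h).mpr hlt)
  · exact fun w h hq => (hu w h.symm).not_gt ((hp.cons_iff h).mp hq)
  · exact fun w h hq => (hv w h).not_gt ((hp.concat_iff h).mp hq)

end Geodesic

namespace UniformGeodesic

variable {V : Type*} {G : SimpleGraph V} {u v : V}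

lemma dist_eq_diam (hG : UniformGeodesic G) (hu : IsMaxDistantFrom G u v)
    (hv : IsMaxDistantFrom G v u) : G.dist u v = G.diam := by
  obtain ⟨p, hpath, hlen⟩ := hG.1.exists_path_of_dist u v
  rw [← hlen]
  exact hG.2 u v p ((isMaxGeodesic_iff p).mpr ⟨⟨hpath, hlen⟩, hu, hv⟩)

/-- If `ediam = ⊤` then `diam = 0`, so `u = v`; a vertex maximally distant from itself is
isolated, and a connected graph with an isolated vertex is a single point. -/
lemma ediam_ne_top (hG : UniformGeodesic G) (hu : IsMaxDistantFrom G u v)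
    (hv : IsMaxDistantFrom G v u) : G.ediam ≠ ⊤ := by
  intro htop
  have huv : u = v := hG.1.dist_eq_zero_iff.mp <| by
    rw [hG.dist_eq_diam hu hv, diam_eq_zero_of_ediam_eq_top htop]
  subst huv
  have hiso : ∀ w, ¬ G.Adj u w := fun w h => by
    have := hu w h
    rw [SimpleGraph.dist_self, Nat.le_zero, dist_eq_one_iff_adj.mpr h.symm] at this
    exact one_ne_zero this
  have : Subsingleton V := ⟨fun a b => by
    have key : ∀ c, u = c := fun c => by
      obtain ⟨p⟩ := hG.1.preconnected u c
      cases p with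
      | nil => rfl
      | cons h _ => exact absurd h (hiso _)
    rw [← key a, ← key b]⟩
  simp [ediam_eq_zero_of_subsingleton] at htop

end UniformGeodesic

namespace cartProdIndexed

variable {ι : Type*} [DecidableEq ι] {W : ι → Type*} (G : ∀ i, SimpleGraph (W i))

lemma adj_update (x : ∀ i, W i) (i : ι) {a b : W i} (h : (G i).Adj a b) :
    (cartProdIndexed G).Adj (update x i a) (update x i b) :=
  ⟨i, by simpa using h, fun j hj => by simp [hj]⟩

def updateHom (x : ∀ i, W i) (i : ι) : G i →g cartProdIndexed G where
  toFun := update x i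
  map_rel' := adj_update G x i

lemma exists_walk_update (x : ∀ i, W i) (i : ι) {a b : W i} (p : (G i).Walk a b) :
    ∃ q : (cartProdIndexed G).Walk (update x i a) (update x i b), q.length = p.length :=
  ⟨p.map (updateHom G x i), p.length_map _⟩

variable {G}

lemma exists_walk_length_eq_sum_dist (hc : ∀ i, (G i).Connected) (s : Finset ι)
    (x y : ∀ i, W i) (hxy : ∀ i ∉ s, x i = y i) :
    ∃ q : (cartProdIndexed G).Walk x y, q.length = ∑ i ∈ s, (G i).dist (x i) (y i) := by
  induction s using Finset.induction_on generalizing x with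
  | empty =>
    obtain rfl : x = y := funext fun i => hxy i (notMem_empty i)
    exact ⟨.nil, rfl⟩
  | @insert i s hi ih =>
    obtain ⟨p, hp⟩ := (hc i).exists_walk_length_eq_dist (x i) (y i)
    have hagree : ∀ j ∉ s, update x i (y i) j = y j := fun j hj => by
      by_cases hji : j = i
      · subst hji; simp
      · simpa [hji] using hxy j (by simp [hji, hj])
    obtain ⟨q₁, hq₁⟩ := exists_walk_update G x i p
    obtain ⟨q₂, hq₂⟩ := ih _ hagree
    refine ⟨(q₁.copy (update_eq_self i x) rfl).append q₂, ?_⟩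
    have hsum : ∑ j ∈ s, (G j).dist (update x i (y i) j) (y j) =
        ∑ j ∈ s, (G j).dist (x j) (y j) :=
      sum_congr rfl fun j hj => by rw [update_of_ne (ne_of_mem_of_not_mem hj hi)]
    rw [Walk.length_append, Walk.length_copy, hq₁, hp, hq₂, hsum, sum_insert hi]

variable [Fintype ι]

lemma sum_dist_le_sum_dist_add_one_of_adj (hc : ∀ i, (G i).Connected) {x z : ∀ i, W i}
    (h : (cartProdIndexed G).Adj x z) (y : ∀ i, W i) :
    ∑ i, (G i).dist (x i) (y i) ≤ ∑ i, (G i).dist (z i) (y i) + 1 := by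
  obtain ⟨i, hi, hxz⟩ := h
  have hdist : (G i).dist (x i) (y i) ≤ (G i).dist (z i) (y i) + 1 := by
    have := (hc i).dist_triangle (u := x i) (v := z i) (w := y i)
    rwa [dist_eq_one_iff_adj.mpr hi, add_comm 1] at this
  rw [Fintype.sum_eq_add_sum_compl i, Fintype.sum_eq_add_sum_compl i,
    sum_congr rfl fun j hj => by rw [hxz j (by simpa using hj)]]
  omega

lemma sum_dist_le_length (hc : ∀ i, (G i).Connected) {x y : ∀ i, W i}
    (q : (cartProdIndexed G).Walk x y) : ∑ i, (G i).dist (x i) (y i) ≤ q.length := by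
  induction q with
  | nil => simp
  | cons h q ih =>
    rw [Walk.length_cons]
    exact (sum_dist_le_sum_dist_add_one_of_adj hc h _).trans (by omega)

lemma connected (hc : ∀ i, (G i).Connected) : (cartProdIndexed G).Connected := by
  have : Nonempty (∀ i, W i) := ⟨fun i => (hc i).nonempty.some⟩
  refine ⟨fun x y => ?_⟩
  obtain ⟨q, -⟩ := exists_walk_length_eq_sum_dist hc univ x y (by simp)
  exact q.reachable

lemma dist_eq_sum (hc : ∀ i, (G i).Connected) (x y : ∀ i, W i) :
    (cartProdIndexed G).dist x y = ∑ i, (G i).dist (x i) (y i) := by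
  obtain ⟨q, hq⟩ := exists_walk_length_eq_sum_dist hc univ x y (by simp)
  obtain ⟨q', hq'⟩ := q.reachable.exists_walk_length_eq_dist
  exact le_antisymm (hq ▸ dist_le q) (hq' ▸ sum_dist_le_length hc q')

lemma diam_eq_sum (hc : ∀ i, (G i).Connected) (hfin : ∀ i, (G i).ediam ≠ ⊤) :
    (cartProdIndexed G).diam = ∑ i, (G i).diam := by
  have hle : (cartProdIndexed G).ediam ≤ ((∑ i, (G i).diam : ℕ) : ℕ∞) :=
    ediam_le_of_edist_le fun x y => by
      rw [← ((connected hc).preconnected x y).coe_dist_eq_edist, dist_eq_sum hc, Nat.cast_le]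
      exact sum_le_sum fun i _ => dist_le_diam (hfin i)
  refine le_antisymm (ENat.toNat_le_of_le_natCast hle) ?_
  have : ∀ i, Nonempty (W i) := fun i => (hc i).nonempty
  choose u v huv using fun i => (G i).exists_dist_eq_diam
  calc ∑ i, (G i).diam = (cartProdIndexed G).dist u v := by simp [dist_eq_sum hc, huv]
    _ ≤ (cartProdIndexed G).diam := dist_le_diam (ne_top_of_le_ne_top (by simp) hle)

lemma sum_dist_update_add (x y : ∀ i, W i) (i : ι) (a : W i) :
    ∑ j, (G j).dist (update x i a j) (y j) + (G i).dist (x i) (y i) =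
      ∑ j, (G j).dist (x j) (y j) + (G i).dist a (y i) := by
  rw [sum_congr rfl fun j _ => apply_update (fun j b => (G j).dist b (y j)) x i a j,
    sum_update_of_mem (mem_univ i), Fintype.sum_eq_add_sum_compl i, compl_eq_univ_sdiff]
  ring

lemma isMaxDistantFrom_apply (hc : ∀ i, (G i).Connected) {x y : ∀ i, W i}
    (h : IsMaxDistantFrom (cartProdIndexed G) x y) (i : ι) :
    IsMaxDistantFrom (G i) (x i) (y i) := fun a ha => by
  have hadj := adj_update G x i ha
  rw [update_eq_self] at hadj
  have := h _ hadj
  rw [dist_eq_sum hc, dist_eq_sum hc] at this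
  have := sum_dist_update_add (G := G) x y i a
  omega

end cartProdIndexed

theorem cartProd_uniformGeodesic_general (r : ℕ) {W : Fin r → Type*}
    (G : ∀ i, SimpleGraph (W i)) (h : ∀ i, UniformGeodesic (G i)) :
    UniformGeodesic (cartProdIndexed G) := by
  have hc : ∀ i, (G i).Connected := fun i => (h i).1
  refine ⟨cartProdIndexed.connected hc, fun x y p hp => ?_⟩
  obtain ⟨hgeo, hx, hy⟩ := (isMaxGeodesic_iff p).mp hp
  have hx' := cartProdIndexed.isMaxDistantFrom_apply hc hx
  have hy' := cartProdIndexed.isMaxDistantFrom_apply hc hy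
  rw [hgeo.2, cartProdIndexed.dist_eq_sum hc,
    cartProdIndexed.diam_eq_sum hc fun i => (h i).ediam_ne_top (hx' i) (hy' i)]
  exact sum_congr rfl fun i _ => (h i).dist_eq_diam (hx' i) (hy' i)

theorem cartProd_uniformGeodesic (r : ℕ) (hr : 1 ≤ r) {W : Fin r → Type*}
    (G : ∀ i, SimpleGraph (W i)) (h : ∀ i, UniformGeodesic (G i)) :
    UniformGeodesic (cartProdIndexed G) :=
  cartProd_uniformGeodesic_general r G h
end

section
/- If T is a tree, then gpack(T) = gpack(SM(T)), where SM(T) is obtained from T by smoothing all vertices of degree 2. -/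
open SimpleGraph

/-- Smoothing the vertex `u` (assumed of degree 2): delete `u` and join its two
neighbors. -/
def SmoothVertexAt {V : Type} (G : SimpleGraph V) (u : V) : SimpleGraph {v : V // v ≠ u} where
  Adj a b := G.Adj ↑a ↑b ∨ (a ≠ b ∧ G.Adj ↑a u ∧ G.Adj u ↑b)
  symm := by
    constructor
    rintro a b (h | ⟨hne, h1, h2⟩)
    · exact Or.inl h.symm
    · exact Or.inr ⟨hne.symm, h2.symm, h1.symm⟩
  loopless := by
    constructor
    rintro a (h | ⟨hne, h1, h2⟩)
    · exact G.irrefl h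
    · exact hne rfl

/-- A graph bundled with its vertex type. -/
structure GraphOn : Type 1 where
  V : Type
  G : SimpleGraph V

/-- One smoothing step: `B` is (isomorphic to) the graph obtained from `A` by
smoothing one vertex of degree 2. -/
def SmoothStep (A B : GraphOn) : Prop :=
  ∃ (u x y : A.V), x ≠ y ∧ A.G.neighborSet u = {x, y} ∧
    Nonempty (B.G ≃g SmoothVertexAt A.G u)

/-!
In an acyclic graph every path is a geodesic, so a maximal geodesic is a path all of whose
end-neighbours lie on it. Such a path never ends at a vertex `u` of degree 2, and it passes through
`u` exactly when it passes through both neighbours `x`, `y` of `u`. Hence deleting `u` maps the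
maximal geodesics of the graph bijectively onto those of the smoothed graph, and two of them are
disjoint before smoothing iff they are disjoint after it (a common vertex `u` leaves the common
vertex `x`). Such a bijection carries packings to packings of the same size.
-/

open Walk Set

theorem List.mem_iff_of_map_val_eq_filter {α : Type*} {P : α → Prop} [DecidablePred P]
    {l : List (Subtype P)} {l' : List α} (h : l.map Subtype.val = l'.filter (P ·))
    (w : Subtype P) : w ∈ l ↔ ↑w ∈ l' := by
  rw [← List.mem_map_of_injective Subtype.val_injective, h, List.mem_filter]
  simp [w.2]

section Packing

variable {V W : Type*} {G : SimpleGraph V} {H : SimpleGraph W}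

lemma IsGeodesicPacking.exists_image {P : Finset (Set V)} (hP : IsGeodesicPacking G ↑P)
    {F : Set V → Set W}
    (hmaps : MapsTo F {s | IsMaxGeodesicSet G s} {t | IsMaxGeodesicSet H t})
    (hinj : InjOn F {s | IsMaxGeodesicSet G s})
    (hdisj : ∀ ⦃s⦄, IsMaxGeodesicSet G s → ∀ ⦃t⦄, IsMaxGeodesicSet G t →
      Disjoint s t → Disjoint (F s) (F t)) :
    ∃ Q : Finset (Set W), IsGeodesicPacking H ↑Q ∧ Q.card = P.card := by
  classical
  refine ⟨P.image F, ⟨?_, ?_⟩, Finset.card_image_of_injOn (hinj.mono fun s hs => hP.1 s hs)⟩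
  · simp only [Finset.coe_image, forall_mem_image]
    exact fun s hs => hmaps (hP.1 s hs)
  · rw [Finset.coe_image]
    rintro _ ⟨s, hs, rfl⟩ _ ⟨t, ht, rfl⟩ hne
    exact hdisj (hP.1 s hs) (hP.1 t ht) (hP.2 hs ht fun h => hne (h ▸ rfl))

theorem gpackNum_eq_of_bijOn {F : Set V → Set W}
    (hF : BijOn F {s | IsMaxGeodesicSet G s} {t | IsMaxGeodesicSet H t})
    (hdisj : ∀ ⦃s⦄, IsMaxGeodesicSet G s → ∀ ⦃t⦄, IsMaxGeodesicSet G t →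
      (Disjoint (F s) (F t) ↔ Disjoint s t)) :
    gpackNum G = gpackNum H := by
  have hinv := hF.invOn_invFunOn
  have hF' := hF.symm hinv.symm
  unfold gpackNum
  congr 1
  ext k
  constructor
  · rintro ⟨P, hP, rfl⟩
    exact hP.exists_image hF.mapsTo hF.injOn fun s hs t ht => (hdisj hs ht).2
  · rintro ⟨Q, hQ, rfl⟩
    refine hQ.exists_image hF'.mapsTo hF'.injOn fun s hs t ht hst => ?_
    rw [← hdisj (hF'.mapsTo hs) (hF'.mapsTo ht), hinv.2 hs, hinv.2 ht]
    exact hst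

end Packing

namespace SimpleGraph

variable {V W : Type*} {G : SimpleGraph V} {H : SimpleGraph W}

def Walk.IsMaximalPath {a b : V} (p : G.Walk a b) : Prop :=
  p.IsPath ∧ G.neighborSet a ⊆ {z | z ∈ p.support} ∧ G.neighborSet b ⊆ {z | z ∈ p.support}

lemma IsAcyclic.isGeodesic_iff (hG : G.IsAcyclic) {a b : V} (p : G.Walk a b) :
    IsGeodesic G p ↔ p.IsPath := by
  refine ⟨And.left, fun hp => ⟨hp, ?_⟩⟩
  obtain ⟨q, hq, hlen⟩ := p.reachable.exists_path_of_dist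
  have hpq : p = q := congrArg Subtype.val ((hG.subsingleton_path a b).elim ⟨p, hp⟩ ⟨q, hq⟩)
  rwa [hpq]

lemma IsAcyclic.isMaxGeodesic_iff (hG : G.IsAcyclic) {a b : V} (p : G.Walk a b) :
    IsMaxGeodesic G p ↔ p.IsMaximalPath := by
  simp only [IsMaxGeodesic, Walk.IsMaximalPath, hG.isGeodesic_iff, cons_isPath_iff,
    concat_isPath_iff, subset_def, mem_neighborSet, mem_ofPred_eq, not_and, not_not]
  refine and_congr_right fun hp => and_congr ?_ ?_
  · exact forall_congr' fun w => ⟨fun h hw => h hw.symm hp, fun h hw _ => h hw.symm⟩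
  · exact forall_congr' fun w => ⟨fun h hw => h hw hp, fun h hw _ => h hw⟩

lemma IsAcyclic.isMaxGeodesicSet_iff (hG : G.IsAcyclic) (s : Set V) :
    IsMaxGeodesicSet G s ↔
      ∃ (a b : V) (p : G.Walk a b), p.IsMaximalPath ∧ s = {z | z ∈ p.support} := by
  simp only [IsMaxGeodesicSet, hG.isMaxGeodesic_iff]

lemma Walk.IsMaximalPath.map_iso (e : G ≃g H) {a b : V} {p : G.Walk a b}
    (hp : p.IsMaximalPath) : (p.map e.toHom).IsMaximalPath := by
  have hsub : ∀ c, G.neighborSet c ⊆ {z | z ∈ p.support} →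
      H.neighborSet (e c) ⊆ {z | z ∈ (p.map e.toHom).support} := by
    intro c hc w hw
    have : G.Adj c (e.symm w) := e.map_adj_iff.1 (by rwa [e.apply_symm_apply])
    simpa [support_map] using ⟨e.symm w, hc this, by simp⟩
  exact ⟨hp.1.map e.injective, hsub a hp.2.1, hsub b hp.2.2⟩

lemma IsAcyclic.isMaxGeodesicSet_image_iso (hG : G.IsAcyclic) (e : G ≃g H) {s : Set V}
    (hs : IsMaxGeodesicSet G s) : IsMaxGeodesicSet H (e '' s) := by
  obtain ⟨a, b, p, hp, rfl⟩ := (hG.isMaxGeodesicSet_iff s).1 hs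
  refine ((e.isAcyclic_iff.1 hG).isMaxGeodesicSet_iff _).2 ⟨_, _, _, hp.map_iso e, ?_⟩
  ext
  simp

theorem IsAcyclic.gpackNum_eq_of_iso (hG : G.IsAcyclic) (e : G ≃g H) :
    gpackNum G = gpackNum H := by
  have hH := e.isAcyclic_iff.1 hG
  refine gpackNum_eq_of_bijOn (F := image e) (InvOn.bijOn (f' := image e.symm) ?_
    (fun s hs => hG.isMaxGeodesicSet_image_iso e hs)
    (fun s hs => hH.isMaxGeodesicSet_image_iso e.symm hs)) fun s _ t _ => ?_
  · exact ⟨fun s _ => e.toEquiv.symm_image_image s, fun s _ => e.toEquiv.image_symm_image s⟩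
  · exact disjoint_image_iff e.injective

lemma adj_of_neighborSet_eq_pair {u x y : V} (hN : G.neighborSet u = {x, y}) :
    G.Adj u x ∧ G.Adj u y := by
  simp [← mem_neighborSet, hN]

lemma Walk.IsPath.mem_support_of_neighborSet_subset {u x y : V} (hN : G.neighborSet u ⊆ {x, y})
    {a b : V} {p : G.Walk a b} (hp : p.IsPath) (ha : a ≠ u) (hb : b ≠ u)
    (hu : u ∈ p.support) : x ∈ p.support ∧ y ∈ p.support := by
  obtain ⟨q, r, -, -, rfl⟩ := hp.mem_support_iff_exists_append.1 hu
  have hq : ¬ q.Nil := not_nil_of_ne ha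
  have hr : ¬ r.Nil := not_nil_of_ne hb.symm
  have hq_mem : q.penultimate ∈ q.support :=
    List.dropLast_subset _ (penultimate_mem_dropLast_support hq)
  have hr_mem : r.snd ∈ r.support.tail := snd_mem_tail_support hr
  have hne : q.penultimate ≠ r.snd := by
    have hnodup := hp.support_nodup
    rw [support_append] at hnodup
    exact fun h => List.disjoint_of_nodup_append hnodup hq_mem (h ▸ hr_mem)
  have hq' : q.penultimate ∈ (q.append r).support :=
    (mem_support_append_iff q r).2 (Or.inl hq_mem)
  have hr' : r.snd ∈ (q.append r).support :=
    (mem_support_append_iff q r).2 (Or.inr (List.mem_of_mem_tail hr_mem))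
  rcases hN (adj_penultimate hq).symm with h₁ | h₁ <;> rcases hN (r.adj_snd hr) with h₂ | h₂ <;>
    rw [h₁] at hq' hne <;> rw [h₂] at hr' hne <;> tauto

lemma IsAcyclic.mem_support_of_adj_of_adj (hG : G.IsAcyclic) {u x y : V} (hxy : x ≠ y)
    (hx : G.Adj u x) (hy : G.Adj u y) {a b : V} (p : G.Walk a b) (hxp : x ∈ p.support)
    (hyp : y ∈ p.support) : u ∈ p.support := by
  classical
  let w := (p.takeUntil x hxp).reverse.append (p.takeUntil y hyp)
  have hpath : (cons hx.symm (cons hy nil)).IsPath := by simp [hxy, hx.ne', hy.ne]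
  have hw : w.bypass = cons hx.symm (cons hy nil) :=
    congrArg Subtype.val ((hG.subsingleton_path x y).elim ⟨_, w.bypass_isPath⟩ ⟨_, hpath⟩)
  have hu : u ∈ w.support := w.support_bypass_subset_support (by simp [hw])
  simp only [w, mem_support_append_iff, support_reverse, List.mem_reverse] at hu
  exact hu.elim (fun h => p.support_takeUntil_subset_support hxp h)
    (fun h => p.support_takeUntil_subset_support hyp h)

lemma Walk.IsMaximalPath.reverse {a b : V} {p : G.Walk a b} (hp : p.IsMaximalPath) :
    p.reverse.IsMaximalPath := by
  simpa [Walk.IsMaximalPath, and_comm] using hp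

lemma Walk.IsMaximalPath.start_ne (hG : G.IsAcyclic) {u x y : V} (hxy : x ≠ y)
    (hx : G.Adj u x) (hy : G.Adj u y) {a b : V} {p : G.Walk a b} (hp : p.IsMaximalPath) :
    a ≠ u := by
  rintro rfl
  exact hxy ((hG.eq_snd_of_adj_start hp.1 hx (hp.2.1 hx)).trans
    (hG.eq_snd_of_adj_start hp.1 hy (hp.2.1 hy)).symm)

lemma IsAcyclic.mem_iff_of_isMaxGeodesicSet (hG : G.IsAcyclic) {u x y : V} (hxy : x ≠ y)
    (hN : G.neighborSet u = {x, y}) {s : Set V} (hs : IsMaxGeodesicSet G s) :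
    u ∈ s ↔ x ∈ s ∧ y ∈ s := by
  obtain ⟨hx, hy⟩ := adj_of_neighborSet_eq_pair hN
  obtain ⟨a, b, p, hp, rfl⟩ := (hG.isMaxGeodesicSet_iff s).1 hs
  have hb : b ≠ u := by simpa using hp.reverse.start_ne hG hxy hx hy
  exact ⟨hp.1.mem_support_of_neighborSet_subset hN.subset (hp.start_ne hG hxy hx hy) hb,
    fun ⟨hxp, hyp⟩ => hG.mem_support_of_adj_of_adj hxy hx hy p hxp hyp⟩

section Smoothing

variable {V : Type} {G : SimpleGraph V} {u x y : V}

lemma smoothVertexAt_adj {a b : {v // v ≠ u}} :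
    (SmoothVertexAt G u).Adj a b ↔ G.Adj a b ∨ (a ≠ b ∧ G.Adj a u ∧ G.Adj u b) :=
  Iff.rfl

theorem exists_smoothVertexAt_walk [DecidableEq V] : ∀ {a b : V} (p : G.Walk a b), p.IsPath →
    (ha : a ≠ u) → (hb : b ≠ u) → ∃ q : (SmoothVertexAt G u).Walk ⟨a, ha⟩ ⟨b, hb⟩,
      q.support.map Subtype.val = p.support.filter (· ≠ u)
  | _, _, .nil, _, ha, _ => ⟨.nil, by simp [ha]⟩
  | _, _, .cons h .nil, _, ha, hb =>
    ⟨.cons (smoothVertexAt_adj.2 (Or.inl h)) .nil, by simp [ha, hb]⟩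
  | a, _, .cons (v := c) h (.cons (v := d) h' p), hp, ha, hb => by
    by_cases hc : c = u
    · obtain ⟨q, hq⟩ := exists_smoothVertexAt_walk p hp.of_cons.of_cons (hc ▸ h').ne' hb
      have had : a ≠ d := by
        rintro rfl
        exact ((cons_isPath_iff _ _).1 hp).2 (by simp)
      refine ⟨.cons (smoothVertexAt_adj.2 (Or.inr ⟨by simpa using had, hc ▸ h, hc ▸ h'⟩)) q, ?_⟩
      rw [support_cons, List.map_cons, hq]
      simp [ha, hc]
    · obtain ⟨q, hq⟩ := exists_smoothVertexAt_walk (.cons h' p) hp.of_cons hc hb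
      refine ⟨.cons (smoothVertexAt_adj.2 (Or.inl h)) q, ?_⟩
      rw [support_cons, List.map_cons, hq]
      simp [ha]

-- The support is recorded as a list, not just as a set, because a walk is determined by its
-- support list; this is what makes the smoothed graph acyclic.
theorem exists_isPath_of_smoothVertexAt [DecidableEq V] (hN : G.neighborSet u ⊆ {x, y})
    {a b : {v // v ≠ u}} (q : (SmoothVertexAt G u).Walk a b) (hq : q.IsPath) :
    ∃ p : G.Walk a b, p.IsPath ∧ q.support.map Subtype.val = p.support.filter (· ≠ u) := by
  induction q with
  | @nil a => exact ⟨nil, by simp, by simp [a.2]⟩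
  | @cons a c b h q ih =>
    obtain ⟨p, hp, hpq⟩ := ih hq.of_cons
    have ha : ↑a ∉ p.support := fun h' =>
      ((cons_isPath_iff _ _).1 hq).2 ((List.mem_iff_of_map_val_eq_filter hpq a).2 h')
    rcases smoothVertexAt_adj.1 h with h | ⟨-, hau, huc⟩
    · refine ⟨cons h p, hp.cons ha, ?_⟩
      rw [support_cons, List.map_cons, hpq]
      simp [a.2]
    · have hu : u ∉ p.support := fun hu => by
        obtain ⟨hx, hy⟩ := hp.mem_support_of_neighborSet_subset hN c.2 b.2 hu
        rcases hN hau.symm with h | h <;> rw [h] at ha <;> contradiction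
      refine ⟨cons hau (cons huc p), (hp.cons hu).cons (by simp [a.2, ha]), ?_⟩
      rw [support_cons, List.map_cons, hpq]
      simp [a.2]

lemma IsAcyclic.smoothVertexAt (hG : G.IsAcyclic) (hN : G.neighborSet u ⊆ {x, y}) :
    (SmoothVertexAt G u).IsAcyclic := by
  classical
  refine isAcyclic_iff_subsingleton_path.2 fun a b => ⟨fun q₁ q₂ => ?_⟩
  obtain ⟨p₁, hp₁, h₁⟩ := exists_isPath_of_smoothVertexAt hN q₁.1 q₁.2
  obtain ⟨p₂, hp₂, h₂⟩ := exists_isPath_of_smoothVertexAt hN q₂.1 q₂.2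
  have hp : p₁ = p₂ := congrArg Subtype.val ((hG.subsingleton_path a b).elim ⟨p₁, hp₁⟩ ⟨p₂, hp₂⟩)
  rw [hp, ← h₂] at h₁
  exact Subtype.ext (ext_support (List.map_injective_iff.2 Subtype.val_injective h₁))

lemma smoothVertexAt_neighborSet_subset_preimage (hN : G.neighborSet u ⊆ {x, y}) {S : Set V}
    (hS : u ∈ S → x ∈ S ∧ y ∈ S) {c : {v // v ≠ u}} (hc : G.neighborSet c ⊆ S) :
    (SmoothVertexAt G u).neighborSet c ⊆ Subtype.val ⁻¹' S := by
  intro w hw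
  rcases smoothVertexAt_adj.1 hw with h | ⟨-, hcu, huw⟩
  · exact hc h
  · obtain ⟨hx, hy⟩ := hS (hc hcu)
    obtain h | h : (w : V) = x ∨ (w : V) = y := hN huw
    · rwa [mem_preimage, h]
    · rwa [mem_preimage, h]

lemma neighborSet_subset_of_smoothVertexAt (hxy : x ≠ y) (hN : G.neighborSet u = {x, y})
    {S : Set V} (hS : x ∈ S → y ∈ S → u ∈ S) {c : {v // v ≠ u}} (hcS : ↑c ∈ S)
    (hc : (SmoothVertexAt G u).neighborSet c ⊆ Subtype.val ⁻¹' S) : G.neighborSet c ⊆ S := by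
  intro w hw
  by_cases hwu : w = u
  · rw [hwu] at hw ⊢
    obtain ⟨hx, hy⟩ := adj_of_neighborSet_eq_pair hN
    have huc : G.Adj u c := ((mem_neighborSet _ _ _).1 hw).symm
    obtain h | h : (c : V) = x ∨ (c : V) = y := by simpa [← mem_neighborSet, hN] using huc
    · have : (SmoothVertexAt G u).Adj c ⟨y, hy.ne'⟩ :=
        smoothVertexAt_adj.2 (Or.inr ⟨by simp [Subtype.ext_iff, h, hxy], huc.symm, hy⟩)
      exact hS (h ▸ hcS) (hc this)
    · have : (SmoothVertexAt G u).Adj c ⟨x, hx.ne'⟩ :=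
        smoothVertexAt_adj.2 (Or.inr ⟨by simp [Subtype.ext_iff, h, hxy.symm], huc.symm, hx⟩)
      exact hS (hc this) (h ▸ hcS)
  · exact hc (show (SmoothVertexAt G u).Adj c ⟨w, hwu⟩ from smoothVertexAt_adj.2 (Or.inl hw))

section Tree

variable (hG : G.IsAcyclic) (hxy : x ≠ y) (hN : G.neighborSet u = {x, y})
include hG hxy hN

lemma IsAcyclic.isMaxGeodesicSet_preimage_smoothVertexAt {s : Set V}
    (hs : IsMaxGeodesicSet G s) : IsMaxGeodesicSet (SmoothVertexAt G u) (Subtype.val ⁻¹' s) := by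
  classical
  obtain ⟨hx, hy⟩ := adj_of_neighborSet_eq_pair hN
  have hS := (hG.mem_iff_of_isMaxGeodesicSet hxy hN hs).1
  obtain ⟨a, b, p, hp, rfl⟩ := (hG.isMaxGeodesicSet_iff s).1 hs
  have ha : a ≠ u := hp.start_ne hG hxy hx hy
  have hb : b ≠ u := by simpa using hp.reverse.start_ne hG hxy hx hy
  obtain ⟨q, hpq⟩ := exists_smoothVertexAt_walk p hp.1 ha hb
  have hq : q.IsPath := IsPath.mk' (List.Nodup.of_map _ (hpq ▸ hp.1.support_nodup.filter _))
  have hsupp : Subtype.val ⁻¹' {z | z ∈ p.support} = {w | w ∈ q.support} :=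
    (Set.ext (List.mem_iff_of_map_val_eq_filter hpq)).symm
  refine ((hG.smoothVertexAt hN.subset).isMaxGeodesicSet_iff _).2
    ⟨_, _, q, ⟨hq, ?_, ?_⟩, hsupp⟩ <;> rw [← hsupp]
  · exact smoothVertexAt_neighborSet_subset_preimage hN.subset hS (c := ⟨a, ha⟩) hp.2.1
  · exact smoothVertexAt_neighborSet_subset_preimage hN.subset hS (c := ⟨b, hb⟩) hp.2.2

lemma IsAcyclic.exists_isMaxGeodesicSet_preimage_eq {t : Set {v // v ≠ u}}
    (ht : IsMaxGeodesicSet (SmoothVertexAt G u) t) :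
    ∃ s, IsMaxGeodesicSet G s ∧ Subtype.val ⁻¹' s = t := by
  classical
  obtain ⟨hx, hy⟩ := adj_of_neighborSet_eq_pair hN
  obtain ⟨a, b, q, hq, rfl⟩ := ((hG.smoothVertexAt hN.subset).isMaxGeodesicSet_iff t).1 ht
  obtain ⟨p, hp, hpq⟩ := exists_isPath_of_smoothVertexAt hN.subset q hq.1
  have hsupp : Subtype.val ⁻¹' {z | z ∈ p.support} = {w | w ∈ q.support} :=
    (Set.ext (List.mem_iff_of_map_val_eq_filter hpq)).symm
  have hS := hG.mem_support_of_adj_of_adj hxy hx hy p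
  refine ⟨_, (hG.isMaxGeodesicSet_iff _).2 ⟨a, b, p, ⟨hp, ?_, ?_⟩, rfl⟩, hsupp⟩
  · exact neighborSet_subset_of_smoothVertexAt hxy hN hS p.start_mem_support (hsupp ▸ hq.2.1)
  · exact neighborSet_subset_of_smoothVertexAt hxy hN hS p.end_mem_support (hsupp ▸ hq.2.2)

lemma IsAcyclic.injOn_preimage_smoothVertexAt :
    InjOn (preimage (Subtype.val : {v // v ≠ u} → V)) {s | IsMaxGeodesicSet G s} := by
  intro s hs t ht hst
  have hmem : ∀ z ≠ u, z ∈ s ↔ z ∈ t := fun z hz => Set.ext_iff.1 hst ⟨z, hz⟩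
  ext z
  by_cases hz : z = u
  · obtain ⟨hx, hy⟩ := adj_of_neighborSet_eq_pair hN
    rw [hz, hG.mem_iff_of_isMaxGeodesicSet hxy hN hs, hG.mem_iff_of_isMaxGeodesicSet hxy hN ht,
      hmem x hx.ne', hmem y hy.ne']
  · exact hmem z hz

lemma IsAcyclic.disjoint_preimage_smoothVertexAt_iff {s t : Set V}
    (hs : IsMaxGeodesicSet G s) (ht : IsMaxGeodesicSet G t) :
    Disjoint (Subtype.val ⁻¹' s : Set {v // v ≠ u}) (Subtype.val ⁻¹' t) ↔ Disjoint s t := by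
  refine ⟨fun h => Set.disjoint_left.2 fun z hzs hzt => ?_, fun h => h.preimage _⟩
  have h' : ∀ w : {v // v ≠ u}, ↑w ∈ s → ↑w ∉ t := fun _ hw => Set.disjoint_left.1 h hw
  by_cases hz : z = u
  · have hx := (adj_of_neighborSet_eq_pair hN).1
    rw [hz] at hzs hzt
    exact h' ⟨x, hx.ne'⟩ ((hG.mem_iff_of_isMaxGeodesicSet hxy hN hs).1 hzs).1
      ((hG.mem_iff_of_isMaxGeodesicSet hxy hN ht).1 hzt).1
  · exact h' ⟨z, hz⟩ hzs hzt

theorem IsAcyclic.gpackNum_smoothVertexAt : gpackNum G = gpackNum (SmoothVertexAt G u) :=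
  gpackNum_eq_of_bijOn
    ⟨fun _ hs => hG.isMaxGeodesicSet_preimage_smoothVertexAt hxy hN hs,
      hG.injOn_preimage_smoothVertexAt hxy hN,
      fun _ ht => hG.exists_isMaxGeodesicSet_preimage_eq hxy hN ht⟩
    fun _ hs _ ht => hG.disjoint_preimage_smoothVertexAt_iff hxy hN hs ht

end Tree

end Smoothing

end SimpleGraph

lemma SmoothStep.isAcyclic {A B : GraphOn} (h : SmoothStep A B) (hA : A.G.IsAcyclic) :
    B.G.IsAcyclic := by
  obtain ⟨u, x, y, -, hN, ⟨e⟩⟩ := h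
  exact e.isAcyclic_iff.2 (hA.smoothVertexAt hN.subset)

lemma SmoothStep.gpackNum_eq {A B : GraphOn} (h : SmoothStep A B) (hA : A.G.IsAcyclic) :
    gpackNum A.G = gpackNum B.G := by
  obtain ⟨u, x, y, hxy, hN, ⟨e⟩⟩ := h
  exact (hA.gpackNum_smoothVertexAt hxy hN).trans
    ((hA.smoothVertexAt hN.subset).gpackNum_eq_of_iso e.symm)

theorem gpack_smoothing_general {V W : Type} (T : SimpleGraph V) (T' : SimpleGraph W)
    (ha : T.IsAcyclic)
    (hchain : Relation.ReflTransGen SmoothStep ⟨V, T⟩ ⟨W, T'⟩) :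
    gpackNum T = gpackNum T' := by
  suffices ∀ B, Relation.ReflTransGen SmoothStep ⟨V, T⟩ B →
      B.G.IsAcyclic ∧ gpackNum T = gpackNum B.G from (this _ hchain).2
  intro B hB
  induction hB with
  | refl => exact ⟨ha, rfl⟩
  | tail _ hstep ih => exact ⟨hstep.isAcyclic ih.1, ih.2.trans (hstep.gpackNum_eq ih.1)⟩

theorem gpack_smoothing {V W : Type} (T : SimpleGraph V) (T' : SimpleGraph W)
    (hc : T.Connected) (ha : T.IsAcyclic)
    (hchain : Relation.ReflTransGen SmoothStep ⟨V, T⟩ ⟨W, T'⟩)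
    (hno2 : ∀ u : W, ¬ ∃ x y : W, x ≠ y ∧ T'.neighborSet u = {x, y}) :
    gpackNum T = gpackNum T' :=
  gpack_smoothing_general T T' ha hchain
end
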